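/- arXiv:math/0605176 — 2 statements merged into one kernel-verified Lean document; each statement's English description precedes it below -/
import Mathlib

section
/- Let 𝒟 ⊆ F_2^48 be the span of (1^16 0^32), (0^32 1^16), and all (a,a,a) with a ∈ RM(1,4), and let 𝒞 = 𝒟^⊥. Then {ξ ∈ F_2^48 : α·ξ ∈ 𝒞 for all α ∈ 𝒟} = {(α,β,γ) ∈ F_2^48 : α, β, γ ∈ RM(2,4) and α + β + γ ∈ RM(1,4)}, where vectors in F_2^48 are written as triples of blocks of length 16. -/
/-- The weight of a binary vector: the number of nonzero coordinates. -/
def wt {n : ℕ} (α : Fin n → ZMod 2) : ℕ :=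
  (Finset.univ.filter (fun i => α i ≠ 0)).card

/-- The standard bilinear form `⟨α,β⟩ = ∑ i, α i * β i` on `F_2^n`. -/
def ip {n : ℕ} (α β : Fin n → ZMod 2) : ZMod 2 := ∑ i, α i * β i

/-- The support of a binary vector. -/
def supp {n : ℕ} (α : Fin n → ZMod 2) : Set (Fin n) := {i | α i ≠ 0}

/-- The dual code of a set of vectors. -/
def dualCode {n : ℕ} (S : Set (Fin n → ZMod 2)) : Set (Fin n → ZMod 2) :=
  {δ | ∀ γ ∈ S, ip δ γ = 0}

/-- The five generators of the first-order Reed–Muller code RM(1,4). -/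
def r0 : Fin 16 → ZMod 2 := fun _ => 1
def r1 : Fin 16 → ZMod 2 := fun i => if i.val < 8 then 1 else 0
def r2 : Fin 16 → ZMod 2 := fun i => if i.val % 8 < 4 then 1 else 0
def r3 : Fin 16 → ZMod 2 := fun i => if i.val % 4 < 2 then 1 else 0
def r4 : Fin 16 → ZMod 2 := fun i => if i.val % 2 = 0 then 1 else 0

/-- The first-order Reed–Muller code RM(1,4) ⊆ F_2^16. -/
def RM14 : Submodule (ZMod 2) (Fin 16 → ZMod 2) :=
  Submodule.span (ZMod 2) {r0, r1, r2, r3, r4}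

/-- The triple repetition `(a, a, a)` of a vector of length 16. -/
def tri (a : Fin 16 → ZMod 2) : Fin 48 → ZMod 2 :=
  fun i => a ⟨i.val % 16, Nat.mod_lt _ (by norm_num)⟩

/-- `(1^16 0^32)`. -/
def e1 : Fin 48 → ZMod 2 := fun i => if i.val < 16 then 1 else 0

/-- `(0^32 1^16)`. -/
def e2 : Fin 48 → ZMod 2 := fun i => if 32 ≤ i.val then 1 else 0

/-- The code 𝒟 ⊆ F_2^48, spanned by `(1^16 0^32)`, `(0^32 1^16)` and all
`(a,a,a)` with `a ∈ RM(1,4)`. -/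
def Dcode : Submodule (ZMod 2) (Fin 48 → ZMod 2) :=
  Submodule.span (ZMod 2) ({e1, e2} ∪ tri '' (RM14 : Set (Fin 16 → ZMod 2)))

/-- The `b`-th block of length 16 of a vector of length 48. -/
def blk (x : Fin 48 → ZMod 2) (b : Fin 3) : Fin 16 → ZMod 2 :=
  fun j => x ⟨16 * b.val + j.val, by have hb := b.isLt; have hj := j.isLt; omega⟩


set_option maxHeartbeats 2000000

def R : Fin 5 → (Fin 16 → ZMod 2) := ![r0, r1, r2, r3, r4]

theorem kk2 : (⟨2, by omega⟩ : Fin 16) = 2 := rfl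
theorem kk3 : (⟨3, by omega⟩ : Fin 16) = 3 := rfl
theorem kk4 : (⟨4, by omega⟩ : Fin 16) = 4 := rfl
theorem kk5 : (⟨5, by omega⟩ : Fin 16) = 5 := rfl
theorem kk6 : (⟨6, by omega⟩ : Fin 16) = 6 := rfl
theorem kk7 : (⟨7, by omega⟩ : Fin 16) = 7 := rfl
theorem kk8 : (⟨8, by omega⟩ : Fin 16) = 8 := rfl
theorem kk9 : (⟨9, by omega⟩ : Fin 16) = 9 := rfl
theorem kk10 : (⟨10, by omega⟩ : Fin 16) = 10 := rfl
theorem kk11 : (⟨11, by omega⟩ : Fin 16) = 11 := rfl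
theorem kk12 : (⟨12, by omega⟩ : Fin 16) = 12 := rfl
theorem kk13 : (⟨13, by omega⟩ : Fin 16) = 13 := rfl
theorem kk14 : (⟨14, by omega⟩ : Fin 16) = 14 := rfl
theorem kk15 : (⟨15, by omega⟩ : Fin 16) = 15 := rfl

theorem vv0 : ((0 : Fin 16) : ℕ) = 0 := rfl
theorem vv1 : ((1 : Fin 16) : ℕ) = 1 := rfl
theorem vv2 : ((2 : Fin 16) : ℕ) = 2 := rfl
theorem vv3 : ((3 : Fin 16) : ℕ) = 3 := rfl
theorem vv4 : ((4 : Fin 16) : ℕ) = 4 := rfl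
theorem vv5 : ((5 : Fin 16) : ℕ) = 5 := rfl
theorem vv6 : ((6 : Fin 16) : ℕ) = 6 := rfl
theorem vv7 : ((7 : Fin 16) : ℕ) = 7 := rfl
theorem vv8 : ((8 : Fin 16) : ℕ) = 8 := rfl
theorem vv9 : ((9 : Fin 16) : ℕ) = 9 := rfl
theorem vv10 : ((10 : Fin 16) : ℕ) = 10 := rfl
theorem vv11 : ((11 : Fin 16) : ℕ) = 11 := rfl
theorem vv12 : ((12 : Fin 16) : ℕ) = 12 := rfl
theorem vv13 : ((13 : Fin 16) : ℕ) = 13 := rfl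
theorem vv14 : ((14 : Fin 16) : ℕ) = 14 := rfl
theorem vv15 : ((15 : Fin 16) : ℕ) = 15 := rfl
theorem L2 (s : Fin 16 → ZMod 2) (h : ∀ k l : Fin 5, ip s (R k * R l) = 0) :
    s = s 15 • r0 + (s 7 + s 15) • r1 + (s 11 + s 15) • r2 + (s 13 + s 15) • r3
      + (s 14 + s 15) • r4 := by
  have htwo : (2 : ZMod 2) = 0 := rfl
  have h00 := h 0 0
  have h01 := h 0 1
  have h02 := h 0 2
  have h03 := h 0 3
  have h04 := h 0 4
  have h11 := h 1 1
  have h12 := h 1 2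
  have h13 := h 1 3
  have h14 := h 1 4
  have h22 := h 2 2
  have h23 := h 2 3
  have h24 := h 2 4
  have h33 := h 3 3
  have h34 := h 3 4
  have h44 := h 4 4
  simp only [ip, Fin.sum_univ_succ, Fin.sum_univ_zero, R, Matrix.cons_val_zero,
    Matrix.cons_val_one, Matrix.head_cons, Pi.mul_apply, r0, r1, r2, r3, r4,
    Matrix.cons_val_two, Matrix.cons_val_three, Matrix.cons_val_four,
    Matrix.vecHead, Matrix.vecTail, Function.comp] at h00 h01 h02 h03 h04 h11 h12 h13 h14 h22 h23 h24 h33 h34 h44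
  norm_num [Fin.succ, r0, r1, r2, r3, r4] at h00 h01 h02 h03 h04 h11 h12 h13 h14 h22 h23 h24 h33 h34 h44
  simp only [kk2, kk3, kk4, kk5, kk6, kk7, kk8, kk9, kk10, kk11, kk12, kk13, kk14, kk15] at h00 h01 h02 h03 h04 h11 h12 h13 h14 h22 h23 h24 h33 h34 h44
  funext i
  fin_cases i <;>
    norm_num [kk2, kk3, kk4, kk5, kk6, kk7, kk8, kk9, kk10, kk11, kk12, kk13, kk14, kk15, Pi.add_apply, Pi.smul_apply,
      smul_eq_mul, r0, r1, r2, r3, r4, vv0, vv1, vv2, vv3, vv4, vv5, vv6, vv7, vv8, vv9, vv10, vv11, vv12, vv13, vv14, vv15]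
  · linear_combination h00 + h12 + h13 + h14 + h23 + h24 + h34 + ((-3 : ZMod 2) * s 0) * htwo + ((-2 : ZMod 2) * s 1) * htwo + ((-2 : ZMod 2) * s 2) * htwo + ((-1 : ZMod 2) * s 3) * htwo + ((-2 : ZMod 2) * s 4) * htwo + ((-1 : ZMod 2) * s 5) * htwo + ((-1 : ZMod 2) * s 6) * htwo + ((-1 : ZMod 2) * s 7) * htwo + ((-2 : ZMod 2) * s 8) * htwo + ((-1 : ZMod 2) * s 9) * htwo + ((-1 : ZMod 2) * s 10) * htwo + ((-1 : ZMod 2) * s 11) * htwo + ((-1 : ZMod 2) * s 12) * htwo + ((-1 : ZMod 2) * s 13) * htwo + ((-1 : ZMod 2) * s 14) * htwo + ((-3 : ZMod 2) * s 15) * htwo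
  · linear_combination h01 + h03 + h14 + h22 + h24 + h34 + ((-3 : ZMod 2) * s 0) * htwo + ((-1 : ZMod 2) * s 1) * htwo + ((-2 : ZMod 2) * s 2) * htwo + ((-1 : ZMod 2) * s 3) * htwo + ((-2 : ZMod 2) * s 4) * htwo + ((-1 : ZMod 2) * s 5) * htwo + ((-1 : ZMod 2) * s 6) * htwo + ((-1 : ZMod 2) * s 7) * htwo + ((-2 : ZMod 2) * s 8) * htwo + ((-1 : ZMod 2) * s 9) * htwo + ((-1 : ZMod 2) * s 10) * htwo + ((-1 : ZMod 2) * s 11) * htwo + ((-1 : ZMod 2) * s 12) * htwo + ((-1 : ZMod 2) * s 13) * htwo + ((-2 : ZMod 2) * s 15) * htwo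
  · linear_combination h01 + h04 + h13 + h22 + h23 + h34 + ((-3 : ZMod 2) * s 0) * htwo + ((-2 : ZMod 2) * s 1) * htwo + ((-1 : ZMod 2) * s 2) * htwo + ((-1 : ZMod 2) * s 3) * htwo + ((-2 : ZMod 2) * s 4) * htwo + ((-1 : ZMod 2) * s 5) * htwo + ((-1 : ZMod 2) * s 6) * htwo + ((-1 : ZMod 2) * s 7) * htwo + ((-2 : ZMod 2) * s 8) * htwo + ((-1 : ZMod 2) * s 9) * htwo + ((-1 : ZMod 2) * s 10) * htwo + ((-1 : ZMod 2) * s 11) * htwo + ((-1 : ZMod 2) * s 12) * htwo + ((-1 : ZMod 2) * s 14) * htwo + ((-2 : ZMod 2) * s 15) * htwo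
  · linear_combination h00 + h03 + h04 + h34 + ((-2 : ZMod 2) * s 0) * htwo + ((-1 : ZMod 2) * s 1) * htwo + ((-1 : ZMod 2) * s 2) * htwo + ((-2 : ZMod 2) * s 4) * htwo + ((-1 : ZMod 2) * s 5) * htwo + ((-1 : ZMod 2) * s 6) * htwo + ((-1 : ZMod 2) * s 7) * htwo + ((-2 : ZMod 2) * s 8) * htwo + ((-1 : ZMod 2) * s 9) * htwo + ((-1 : ZMod 2) * s 10) * htwo + ((-1 : ZMod 2) * s 11) * htwo + ((-2 : ZMod 2) * s 12) * htwo + ((-1 : ZMod 2) * s 13) * htwo + ((-1 : ZMod 2) * s 14) * htwo + ((-2 : ZMod 2) * s 15) * htwo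
  · linear_combination h01 + h03 + h04 + h12 + h23 + h24 + ((-3 : ZMod 2) * s 0) * htwo + ((-2 : ZMod 2) * s 1) * htwo + ((-2 : ZMod 2) * s 2) * htwo + ((-1 : ZMod 2) * s 3) * htwo + ((-1 : ZMod 2) * s 4) * htwo + ((-1 : ZMod 2) * s 5) * htwo + ((-1 : ZMod 2) * s 6) * htwo + ((-1 : ZMod 2) * s 7) * htwo + ((-2 : ZMod 2) * s 8) * htwo + ((-1 : ZMod 2) * s 9) * htwo + ((-1 : ZMod 2) * s 10) * htwo + ((-1 : ZMod 2) * s 12) * htwo + ((-1 : ZMod 2) * s 13) * htwo + ((-1 : ZMod 2) * s 14) * htwo + ((-2 : ZMod 2) * s 15) * htwo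
  · linear_combination h00 + h04 + h22 + h24 + ((-2 : ZMod 2) * s 0) * htwo + ((-1 : ZMod 2) * s 1) * htwo + ((-2 : ZMod 2) * s 2) * htwo + ((-1 : ZMod 2) * s 3) * htwo + ((-1 : ZMod 2) * s 4) * htwo + ((-1 : ZMod 2) * s 6) * htwo + ((-1 : ZMod 2) * s 7) * htwo + ((-2 : ZMod 2) * s 8) * htwo + ((-1 : ZMod 2) * s 9) * htwo + ((-2 : ZMod 2) * s 10) * htwo + ((-1 : ZMod 2) * s 11) * htwo + ((-1 : ZMod 2) * s 12) * htwo + ((-1 : ZMod 2) * s 13) * htwo + ((-1 : ZMod 2) * s 14) * htwo + ((-2 : ZMod 2) * s 15) * htwo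
  · linear_combination h00 + h03 + h22 + h23 + ((-2 : ZMod 2) * s 0) * htwo + ((-2 : ZMod 2) * s 1) * htwo + ((-1 : ZMod 2) * s 2) * htwo + ((-1 : ZMod 2) * s 3) * htwo + ((-1 : ZMod 2) * s 4) * htwo + ((-1 : ZMod 2) * s 5) * htwo + ((-1 : ZMod 2) * s 7) * htwo + ((-2 : ZMod 2) * s 8) * htwo + ((-2 : ZMod 2) * s 9) * htwo + ((-1 : ZMod 2) * s 10) * htwo + ((-1 : ZMod 2) * s 11) * htwo + ((-1 : ZMod 2) * s 12) * htwo + ((-1 : ZMod 2) * s 13) * htwo + ((-1 : ZMod 2) * s 14) * htwo + ((-2 : ZMod 2) * s 15) * htwo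
  · linear_combination ((-1 : ZMod 2) * s 15) * htwo
  · linear_combination h03 + h04 + h12 + h13 + h14 + h22 + ((-3 : ZMod 2) * s 0) * htwo + ((-2 : ZMod 2) * s 1) * htwo + ((-2 : ZMod 2) * s 2) * htwo + ((-1 : ZMod 2) * s 3) * htwo + ((-2 : ZMod 2) * s 4) * htwo + ((-1 : ZMod 2) * s 5) * htwo + ((-1 : ZMod 2) * s 6) * htwo + ((-1 : ZMod 2) * s 8) * htwo + ((-1 : ZMod 2) * s 9) * htwo + ((-1 : ZMod 2) * s 10) * htwo + ((-1 : ZMod 2) * s 11) * htwo + ((-1 : ZMod 2) * s 12) * htwo + ((-1 : ZMod 2) * s 13) * htwo + ((-1 : ZMod 2) * s 14) * htwo + ((-2 : ZMod 2) * s 15) * htwo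
  · linear_combination h00 + h01 + h04 + h14 + ((-2 : ZMod 2) * s 0) * htwo + ((-1 : ZMod 2) * s 1) * htwo + ((-2 : ZMod 2) * s 2) * htwo + ((-1 : ZMod 2) * s 3) * htwo + ((-2 : ZMod 2) * s 4) * htwo + ((-1 : ZMod 2) * s 5) * htwo + ((-2 : ZMod 2) * s 6) * htwo + ((-1 : ZMod 2) * s 7) * htwo + ((-1 : ZMod 2) * s 8) * htwo + ((-1 : ZMod 2) * s 10) * htwo + ((-1 : ZMod 2) * s 11) * htwo + ((-1 : ZMod 2) * s 12) * htwo + ((-1 : ZMod 2) * s 13) * htwo + ((-1 : ZMod 2) * s 14) * htwo + ((-2 : ZMod 2) * s 15) * htwo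
  · linear_combination h00 + h01 + h03 + h13 + ((-2 : ZMod 2) * s 0) * htwo + ((-2 : ZMod 2) * s 1) * htwo + ((-1 : ZMod 2) * s 2) * htwo + ((-1 : ZMod 2) * s 3) * htwo + ((-2 : ZMod 2) * s 4) * htwo + ((-2 : ZMod 2) * s 5) * htwo + ((-1 : ZMod 2) * s 6) * htwo + ((-1 : ZMod 2) * s 7) * htwo + ((-1 : ZMod 2) * s 8) * htwo + ((-1 : ZMod 2) * s 9) * htwo + ((-1 : ZMod 2) * s 11) * htwo + ((-1 : ZMod 2) * s 12) * htwo + ((-1 : ZMod 2) * s 13) * htwo + ((-1 : ZMod 2) * s 14) * htwo + ((-2 : ZMod 2) * s 15) * htwo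
  · linear_combination ((-1 : ZMod 2) * s 15) * htwo
  · linear_combination h00 + h01 + h12 + h22 + ((-2 : ZMod 2) * s 0) * htwo + ((-2 : ZMod 2) * s 1) * htwo + ((-2 : ZMod 2) * s 2) * htwo + ((-2 : ZMod 2) * s 3) * htwo + ((-1 : ZMod 2) * s 4) * htwo + ((-1 : ZMod 2) * s 5) * htwo + ((-1 : ZMod 2) * s 6) * htwo + ((-1 : ZMod 2) * s 7) * htwo + ((-1 : ZMod 2) * s 8) * htwo + ((-1 : ZMod 2) * s 9) * htwo + ((-1 : ZMod 2) * s 10) * htwo + ((-1 : ZMod 2) * s 11) * htwo + ((-1 : ZMod 2) * s 13) * htwo + ((-1 : ZMod 2) * s 14) * htwo + ((-2 : ZMod 2) * s 15) * htwo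
  · linear_combination ((-1 : ZMod 2) * s 15) * htwo
  · linear_combination ((-1 : ZMod 2) * s 15) * htwo


theorem zmod2_eq (c : ZMod 2) : c = 0 ∨ c = 1 := by revert c; decide

theorem span_ind {n : ℕ} {S : Set (Fin n → ZMod 2)} {P : (Fin n → ZMod 2) → Prop}
    (h0 : P 0) (hadd : ∀ a b, P a → P b → P (a + b)) (hS : ∀ g ∈ S, P g) :
    ∀ a ∈ Submodule.span (ZMod 2) S, P a := by
  intro a ha
  refine Submodule.span_induction (p := fun y _ => P y) (fun g hg => hS g hg) h0
    (fun u v _ _ hu hv => hadd u v hu hv) (fun c u _ hu => ?_) ha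
  rcases zmod2_eq c with rfl | rfl
  · rw [zero_smul]; exact h0
  · rw [one_smul]; exact hu

theorem ip_zero_left {n : ℕ} (a : Fin n → ZMod 2) : ip 0 a = 0 := by simp [ip]

theorem ip_zero_right {n : ℕ} (a : Fin n → ZMod 2) : ip a 0 = 0 := by simp [ip]

theorem ip_add_left {n : ℕ} (a b c : Fin n → ZMod 2) : ip (a + b) c = ip a c + ip b c := by
  simp [ip, add_mul, Finset.sum_add_distrib]

theorem ip_add_right {n : ℕ} (a b c : Fin n → ZMod 2) : ip a (b + c) = ip a b + ip a c := by
  simp [ip, mul_add, Finset.sum_add_distrib]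

theorem ip_mul_shift {n : ℕ} (a x b : Fin n → ZMod 2) : ip (a * x) b = ip x (a * b) := by
  simp only [ip, Pi.mul_apply]
  exact Finset.sum_congr rfl (fun i _ => by ring)

theorem mem_dual_span {n : ℕ} {S : Set (Fin n → ZMod 2)} {δ : Fin n → ZMod 2}
    (h : ∀ g ∈ S, ip δ g = 0) :
    δ ∈ dualCode ((Submodule.span (ZMod 2) S : Submodule (ZMod 2) (Fin n → ZMod 2)) :
      Set (Fin n → ZMod 2)) := by
  intro γ hγ
  refine span_ind (P := fun γ => ip δ γ = 0) (ip_zero_right δ)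
    (fun u v hu hv => ?_) h γ hγ
  show ip δ (u + v) = 0
  have hu' : ip δ u = 0 := hu
  have hv' : ip δ v = 0 := hv
  rw [ip_add_right, hu', hv', add_zero]

theorem r0mem : r0 ∈ RM14 := Submodule.subset_span (by simp)
theorem r1mem : r1 ∈ RM14 := Submodule.subset_span (by simp)
theorem r2mem : r2 ∈ RM14 := Submodule.subset_span (by simp)
theorem r3mem : r3 ∈ RM14 := Submodule.subset_span (by simp)
theorem r4mem : r4 ∈ RM14 := Submodule.subset_span (by simp)

theorem rmem : ∀ k : Fin 5, R k ∈ RM14 := by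
  intro k
  fin_cases k
  exacts [r0mem, r1mem, r2mem, r3mem, r4mem]

theorem mem5 : ∀ g ∈ ({r0, r1, r2, r3, r4} : Set (Fin 16 → ZMod 2)), ∃ k : Fin 5, g = R k := by
  intro g hg
  simp only [Set.mem_insert_iff, Set.mem_singleton_iff] at hg
  rcases hg with rfl | rfl | rfl | rfl | rfl
  exacts [⟨0, rfl⟩, ⟨1, rfl⟩, ⟨2, rfl⟩, ⟨3, rfl⟩, ⟨4, rfl⟩]

/-- The block-index equivalence. -/
def be : Fin 3 × Fin 16 ≃ Fin 48 where
  toFun p := ⟨16 * p.1.val + p.2.val, by have h1 := p.1.isLt; have h2 := p.2.isLt; omega⟩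
  invFun i := (⟨i.val / 16, by have := i.isLt; omega⟩, ⟨i.val % 16, by omega⟩)
  left_inv := by
    rintro ⟨b, j⟩
    have hb := b.isLt; have hj := j.isLt
    simp only [Prod.mk.injEq, Fin.ext_iff]
    constructor <;> omega
  right_inv := by
    intro i
    have := i.isLt
    simp only [Fin.ext_iff]
    omega

theorem ip_blocks (x v : Fin 48 → ZMod 2) :
    ip x v = ip (blk x 0) (blk v 0) + ip (blk x 1) (blk v 1) + ip (blk x 2) (blk v 2) := by
  have h := Fintype.sum_bijective be be.bijective (fun p => x (be p) * v (be p))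
    (fun i => x i * v i) (fun p => rfl)
  rw [ip, ← h, Fintype.sum_prod_type, Fin.sum_univ_three]
  rfl

theorem blk_mul (u v : Fin 48 → ZMod 2) (b : Fin 3) : blk (u * v) b = blk u b * blk v b := rfl

theorem blk_tri (a : Fin 16 → ZMod 2) (b : Fin 3) : blk (tri a) b = a := by
  funext j
  show a ⟨(16 * b.val + j.val) % 16, _⟩ = a j
  congr 1
  apply Fin.ext
  show (16 * b.val + j.val) % 16 = j.val
  have := j.isLt
  omega

theorem ip_e1_tri (x : Fin 48 → ZMod 2) (a : Fin 16 → ZMod 2) :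
    ip x (e1 * tri a) = ip (blk x 0) a := by
  have b0 : blk (e1 * tri a) 0 = a := by
    rw [blk_mul, blk_tri, show blk e1 0 = 1 from by decide, one_mul]
  have b1 : blk (e1 * tri a) 1 = 0 := by
    rw [blk_mul, blk_tri, show blk e1 1 = 0 from by decide, zero_mul]
  have b2 : blk (e1 * tri a) 2 = 0 := by
    rw [blk_mul, blk_tri, show blk e1 2 = 0 from by decide, zero_mul]
  rw [ip_blocks, b0, b1, b2, ip_zero_right, ip_zero_right, add_zero, add_zero]

theorem ip_e2_tri (x : Fin 48 → ZMod 2) (a : Fin 16 → ZMod 2) :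
    ip x (e2 * tri a) = ip (blk x 2) a := by
  have b0 : blk (e2 * tri a) 0 = 0 := by
    rw [blk_mul, blk_tri, show blk e2 0 = 0 from by decide, zero_mul]
  have b1 : blk (e2 * tri a) 1 = 0 := by
    rw [blk_mul, blk_tri, show blk e2 1 = 0 from by decide, zero_mul]
  have b2 : blk (e2 * tri a) 2 = a := by
    rw [blk_mul, blk_tri, show blk e2 2 = 1 from by decide, one_mul]
  rw [ip_blocks, b0, b1, b2, ip_zero_right, ip_zero_right, zero_add, zero_add]

theorem ip_tri_tri (x : Fin 48 → ZMod 2) (a b : Fin 16 → ZMod 2) :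
    ip x (tri a * tri b) =
      ip (blk x 0) (a * b) + ip (blk x 1) (a * b) + ip (blk x 2) (a * b) := by
  have h : ∀ c : Fin 3, blk (tri a * tri b) c = a * b := fun c => by
    rw [blk_mul, blk_tri, blk_tri]
  rw [ip_blocks, h 0, h 1, h 2]

theorem tripKey : ∀ s ∈ RM14, ∀ a ∈ RM14, ∀ b ∈ RM14, ip s (a * b) = 0 := by
  have base : ∀ m k l : Fin 5, ip (R m) (R k * R l) = 0 := by decide
  have st1 : ∀ m k : Fin 5, ∀ b ∈ RM14, ip (R m) (R k * b) = 0 := by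
    intro m k
    refine span_ind ?_ ?_ ?_
    · rw [mul_zero, ip_zero_right]
    · intro u v hu hv; rw [mul_add, ip_add_right, hu, hv, add_zero]
    · intro g hg; obtain ⟨l, rfl⟩ := mem5 g hg; exact base m k l
  have st2 : ∀ m : Fin 5, ∀ a ∈ RM14, ∀ b ∈ RM14, ip (R m) (a * b) = 0 := by
    intro m
    refine span_ind ?_ ?_ ?_
    · intro b _; rw [zero_mul, ip_zero_right]
    · intro u v hu hv b hb; rw [add_mul, ip_add_right, hu b hb, hv b hb, add_zero]
    · intro g hg; obtain ⟨k, rfl⟩ := mem5 g hg; exact st1 m k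
  refine span_ind ?_ ?_ ?_
  · intro a _ b _; rw [ip_zero_left]
  · intro u v hu hv a ha b hb; rw [ip_add_left, hu a ha b hb, hv a ha b hb, add_zero]
  · intro g hg; obtain ⟨m, rfl⟩ := mem5 g hg; exact st2 m


theorem stmt12 (x : Fin 48 → ZMod 2) :
    (∀ α ∈ Dcode, α * x ∈ dualCode (Dcode : Set (Fin 48 → ZMod 2))) ↔
      (blk x 0 ∈ dualCode (RM14 : Set (Fin 16 → ZMod 2)) ∧
        blk x 1 ∈ dualCode (RM14 : Set (Fin 16 → ZMod 2)) ∧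
        blk x 2 ∈ dualCode (RM14 : Set (Fin 16 → ZMod 2)) ∧
        blk x 0 + blk x 1 + blk x 2 ∈ RM14) := by
  constructor
  · intro H
    have key : ∀ g ∈ Dcode, ∀ g' ∈ Dcode, ip x (g * g') = 0 := by
      intro g hg g' hg'
      rw [← ip_mul_shift]
      exact H g hg g' hg'
    have htr : ∀ a ∈ RM14, tri a ∈ Dcode := fun a ha =>
      Submodule.subset_span (Set.mem_union_right _ ⟨a, ha, rfl⟩)
    have he1 : e1 ∈ Dcode := Submodule.subset_span (Set.mem_union_left _ (by simp))
    have he2 : e2 ∈ Dcode := Submodule.subset_span (Set.mem_union_left _ (by simp))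
    have hA : ∀ k : Fin 5, ip (blk x 0) (R k) = 0 := by
      intro k
      have h := key e1 he1 (tri (R k)) (htr _ (rmem k))
      rwa [ip_e1_tri] at h
    have hC : ∀ k : Fin 5, ip (blk x 2) (R k) = 0 := by
      intro k
      have h := key e2 he2 (tri (R k)) (htr _ (rmem k))
      rwa [ip_e2_tri] at h
    have hS : ∀ k l : Fin 5, ip (blk x 0 + blk x 1 + blk x 2) (R k * R l) = 0 := by
      intro k l
      have h := key (tri (R k)) (htr _ (rmem k)) (tri (R l)) (htr _ (rmem l))
      rw [ip_tri_tri] at h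
      rw [ip_add_left, ip_add_left]
      exact h
    have hB : ∀ k : Fin 5, ip (blk x 1) (R k) = 0 := by
      intro k
      have h := hS 0 k
      have e : R 0 * R k = R k := by rw [show R 0 = 1 from rfl, one_mul]
      rw [e, ip_add_left, ip_add_left, hA k, hC k] at h
      simpa using h
    refine ⟨?_, ?_, ?_, ?_⟩
    · exact mem_dual_span (fun g hg => by obtain ⟨k, rfl⟩ := mem5 g hg; exact hA k)
    · exact mem_dual_span (fun g hg => by obtain ⟨k, rfl⟩ := mem5 g hg; exact hB k)
    · exact mem_dual_span (fun g hg => by obtain ⟨k, rfl⟩ := mem5 g hg; exact hC k)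
    · rw [L2 (blk x 0 + blk x 1 + blk x 2) hS]
      exact add_mem (add_mem (add_mem (add_mem
        (Submodule.smul_mem _ _ r0mem) (Submodule.smul_mem _ _ r1mem))
        (Submodule.smul_mem _ _ r2mem)) (Submodule.smul_mem _ _ r3mem))
        (Submodule.smul_mem _ _ r4mem)
  · rintro ⟨hd0, hd1, hd2, hm⟩
    have f1 : ∀ a ∈ RM14, ip x (e1 * tri a) = 0 := fun a ha => by
      rw [ip_e1_tri]; exact hd0 a ha
    have f2 : ∀ a ∈ RM14, ip x (e2 * tri a) = 0 := fun a ha => by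
      rw [ip_e2_tri]; exact hd2 a ha
    have f3 : ∀ a ∈ RM14, ∀ b ∈ RM14, ip x (tri a * tri b) = 0 := fun a ha b hb => by
      rw [ip_tri_tri, ← ip_add_left, ← ip_add_left]
      exact tripKey _ hm a ha b hb
    have core : ∀ g ∈ ({e1, e2} ∪ tri '' (RM14 : Set (Fin 16 → ZMod 2)) :
        Set (Fin 48 → ZMod 2)),
        ∀ g' ∈ ({e1, e2} ∪ tri '' (RM14 : Set (Fin 16 → ZMod 2)) : Set (Fin 48 → ZMod 2)),
        ip x (g * g') = 0 := by
      intro g hg g' hg'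
      simp only [Set.mem_union, Set.mem_insert_iff, Set.mem_singleton_iff, Set.mem_image,
        SetLike.mem_coe] at hg hg'
      rcases hg with (rfl | rfl) | ⟨a, ha, rfl⟩ <;>
        rcases hg' with (rfl | rfl) | ⟨b, hb, rfl⟩
      · rw [show e1 * e1 = e1 * tri r0 from by decide]; exact f1 r0 r0mem
      · rw [show e1 * e2 = 0 from by decide]; exact ip_zero_right x
      · exact f1 b hb
      · rw [mul_comm, show e1 * e2 = 0 from by decide]; exact ip_zero_right x
      · rw [show e2 * e2 = e2 * tri r0 from by decide]; exact f2 r0 r0mem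
      · exact f2 b hb
      · rw [mul_comm]; exact f1 a ha
      · rw [mul_comm]; exact f2 a ha
      · exact f3 a ha b hb
    intro α hα
    refine span_ind (P := fun α => α * x ∈ dualCode (Dcode : Set (Fin 48 → ZMod 2)))
      ?_ ?_ ?_ α hα
    · show (0 : Fin 48 → ZMod 2) * x ∈ dualCode (Dcode : Set (Fin 48 → ZMod 2))
      rw [zero_mul]
      intro γ _
      exact ip_zero_left γ
    · intro u v hu hv
      show (u + v) * x ∈ dualCode (Dcode : Set (Fin 48 → ZMod 2))
      have hu' : u * x ∈ dualCode (Dcode : Set (Fin 48 → ZMod 2)) := hu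
      have hv' : v * x ∈ dualCode (Dcode : Set (Fin 48 → ZMod 2)) := hv
      intro γ hγ
      rw [add_mul, ip_add_left, hu' γ hγ, hv' γ hγ, add_zero]
    · intro g hg
      exact mem_dual_span (fun g' hg' => by rw [ip_mul_shift]; exact core g hg g' hg')
end

section
/- Let 𝒟 ⊆ F_2^48 be the span of (1^16 0^32), (0^32 1^16), and all (a,a,a) with a ∈ RM(1,4); let 𝒞 = 𝒟^⊥; and let ξ = (110000001100000001100000011000001010000010100000) ∈ F_2^48. Then the subcode 𝒞_ξ = {β ∈ 𝒞 : supp(β) ⊆ supp(ξ)} is self-dual with respect to ξ; moreover ⟨β,ξ⟩ = 0 for every β ∈ 𝒞_ξ, so that 𝒞_ξ = {β ∈ 𝒞 : ⟨β,ξ⟩ = 0 and supp(β) ⊆ supp(ξ)}. -/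
/-- ξ = (1100 0000 1100 0000 | 0110 0000 0110 0000 | 1010 0000 1010 0000) ∈ F_2^48. -/
def xiv : Fin 48 → ZMod 2 :=
  fun i => if i.val ∈ [0, 1, 8, 9, 17, 18, 25, 26, 32, 34, 40, 42] then 1 else 0

/-- The support of a code: the union of the supports of its codewords. -/
def codeSupp {n : ℕ} (S : Set (Fin n → ZMod 2)) : Set (Fin n) := ⋃ h ∈ S, supp h

/-- `H^{⊥_β}`: vectors with support inside `supp β` orthogonal to every element of `H`. -/
def perpWrt {n : ℕ} (β : Fin n → ZMod 2) (H : Set (Fin n → ZMod 2)) :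
    Set (Fin n → ZMod 2) :=
  {δ | supp δ ⊆ supp β ∧ ∀ h ∈ H, ip δ h = 0}

/-- `H` is self-dual with respect to `β` if `supp H = supp β` and `H^{⊥_β} = H`. -/
def selfDualWrt {n : ℕ} (β : Fin n → ZMod 2) (H : Set (Fin n → ZMod 2)) : Prop :=
  codeSupp H = supp β ∧ perpWrt β H = H

/-!
Over `F_2` a vector `ξ` is the indicator of its support, so restricting to `supp ξ` is
multiplication by `ξ`. The weighted form `⟨ξ d, d'⟩` vanishes on the generators of `𝒟`, hence
`ξ 𝒟 ⊆ 𝒞_ξ`; conversely an element of `𝒞_ξ` is determined by its values at six pivot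
coordinates, which elements of `ξ 𝒟` realise freely, so `𝒞_ξ = ξ 𝒟`. Self-duality follows
because, for `β` supported in `supp ξ`, `⟨β, ξ d⟩ = ⟨β, d⟩`. Since `𝒟` contains the all-one
word, `ξ ∈ 𝒞_ξ`, which gives both `supp 𝒞_ξ = supp ξ` and `⟨β, ξ⟩ = 0` on `𝒞_ξ`.
-/

open Submodule (span subset_span)

section General

variable {n : ℕ}

def supportedSubcode (C : Set (Fin n → ZMod 2)) (ξ : Fin n → ZMod 2) : Set (Fin n → ZMod 2) :=
  {β | β ∈ C ∧ supp β ⊆ supp ξ}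

theorem ip_eq_dotProduct (α β : Fin n → ZMod 2) : ip α β = α ⬝ᵥ β := rfl

theorem ip_comm (α β : Fin n → ZMod 2) : ip α β = ip β α := dotProduct_comm α β

theorem ip_mul_left (ξ α β : Fin n → ZMod 2) : ip (ξ * α) β = ip α (ξ * β) :=
  Finset.sum_congr rfl fun i _ => by simp only [Pi.mul_apply]; ring

theorem mul_eq_self_of_supp_subset {ξ β : Fin n → ZMod 2} (h : supp β ⊆ supp ξ) :
    ξ * β = β := by
  funext i
  by_cases hβ : β i = 0
  · simp [hβ]
  · have hξ : ξ i = 1 := Fin.eq_one_of_ne_zero _ (h hβ)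
    simp [hξ]

theorem supp_mul_subset (ξ d : Fin n → ZMod 2) : supp (ξ * d) ⊆ supp ξ :=
  fun i hi hξ => hi (by simp [hξ])

theorem ip_mul_right_of_supp_subset {ξ β : Fin n → ZMod 2} (h : supp β ⊆ supp ξ)
    (γ : Fin n → ZMod 2) : ip β (ξ * γ) = ip β γ := by
  rw [← ip_mul_left, mul_eq_self_of_supp_subset h]

theorem sub_mem_dualCode {S : Set (Fin n → ZMod 2)} {α β : Fin n → ZMod 2}
    (hα : α ∈ dualCode S) (hβ : β ∈ dualCode S) : α - β ∈ dualCode S := fun γ hγ => by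
  rw [ip_eq_dotProduct, sub_dotProduct, ← ip_eq_dotProduct, ← ip_eq_dotProduct, hα γ hγ,
    hβ γ hγ, sub_zero]

theorem sub_mem_supportedSubcode {S : Set (Fin n → ZMod 2)} {ξ β β' : Fin n → ZMod 2}
    (hβ : β ∈ supportedSubcode (dualCode S) ξ) (hβ' : β' ∈ supportedSubcode (dualCode S) ξ) :
    β - β' ∈ supportedSubcode (dualCode S) ξ := by
  refine ⟨sub_mem_dualCode hβ.1 hβ'.1, fun i hi hξ => hi ?_⟩
  have h₁ : β i = 0 := not_not.1 fun h => hβ.2 h hξ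
  have h₂ : β' i = 0 := not_not.1 fun h => hβ'.2 h hξ
  simp [h₁, h₂]

theorem dualCode_span (S : Set (Fin n → ZMod 2)) :
    dualCode (span (ZMod 2) S : Set (Fin n → ZMod 2)) = dualCode S := by
  ext δ
  refine ⟨fun h γ hγ => h γ (subset_span hγ), fun h γ hγ => ?_⟩
  induction hγ using Submodule.span_induction with
  | mem γ hγ => exact h γ hγ
  | zero => exact dotProduct_zero δ
  | add x y _ _ hx hy =>
    rw [ip_eq_dotProduct, dotProduct_add, ← ip_eq_dotProduct, ← ip_eq_dotProduct, hx, hy,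
      add_zero]
  | smul c x _ hx => rw [ip_eq_dotProduct, dotProduct_smul, ← ip_eq_dotProduct, hx, smul_zero]

theorem mul_mem_dualCode_span {r : ℕ} (g : Fin r → Fin n → ZMod 2) (ξ : Fin n → ZMod 2)
    (h : ∀ i j, ip (ξ * g i) (g j) = 0) :
    ∀ d ∈ span (ZMod 2) (Set.range g), ξ * d ∈ dualCode (span (ZMod 2) (Set.range g) : Set _) := by
  intro d hd
  rw [dualCode_span]
  rintro _ ⟨j, rfl⟩
  have hj : ξ * g j ∈ dualCode (span (ZMod 2) (Set.range g) : Set _) := by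
    rw [dualCode_span]
    rintro _ ⟨i, rfl⟩
    exact h j i
  rw [ip_mul_left, ip_comm]
  exact hj d hd

theorem eq_zero_of_supp_subset_range {r m : ℕ} (g : Fin r → Fin n → ZMod 2) {t : Fin m → Fin n}
    (ht : Function.Injective t)
    (hcols : ∀ v : Fin m → ZMod 2, (∀ j, ∑ k, v k * g j (t k) = 0) → v = 0)
    {β : Fin n → ZMod 2} (hsupp : supp β ⊆ Set.range t) (horth : ∀ j, ip β (g j) = 0) :
    β = 0 := by
  have hrestrict : β ∘ t = 0 := hcols _ fun j => by
    rw [← horth j]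
    refine Fintype.sum_of_injective t ht _ _ (fun i hi => ?_) fun k => rfl
    rw [not_not.1 (mt (@hsupp i) hi), zero_mul]
  funext i
  by_contra hi
  obtain ⟨k, rfl⟩ := hsupp hi
  exact hi (congrFun hrestrict k)

end General

section Shortening

variable {n : ℕ} (D : Submodule (ZMod 2) (Fin n → ZMod 2)) (ξ : Fin n → ZMod 2)

theorem mul_mem_supportedSubcode (hself : ∀ d ∈ D, ξ * d ∈ dualCode D) {d : Fin n → ZMod 2}
    (hd : d ∈ D) : ξ * d ∈ supportedSubcode (dualCode D) ξ :=
  ⟨hself d hd, supp_mul_subset ξ d⟩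

theorem exists_mul_eq_of_pivots {m : ℕ} (hself : ∀ d ∈ D, ξ * d ∈ dualCode D)
    (p : Fin m → Fin n) (lift : Fin m → Fin n → ZMod 2) (hlift : ∀ j, lift j ∈ D)
    (hpivot : ∀ j k, (ξ * lift j) (p k) = if j = k then 1 else 0)
    (hinfo : ∀ β ∈ supportedSubcode (dualCode D) ξ, (∀ k, β (p k) = 0) → β = 0) :
    ∀ β ∈ supportedSubcode (dualCode D) ξ, ∃ d ∈ D, ξ * d = β := by
  intro β hβ
  -- `β - ξ * ∑ j, β (p j) • lift j` lies in `𝒞_ξ` and vanishes at the pivots, hence is zero.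
  have hd : ∑ j, β (p j) • lift j ∈ D := Submodule.sum_mem D fun j _ => D.smul_mem _ (hlift j)
  refine ⟨_, hd, (sub_eq_zero.1 (hinfo _ (sub_mem_supportedSubcode hβ
    (mul_mem_supportedSubcode D ξ hself hd)) fun k => ?_)).symm⟩
  have hexpand : (ξ * ∑ j, β (p j) • lift j) (p k) = ∑ j, β (p j) * (ξ * lift j) (p k) := by
    simp only [Pi.mul_apply, Finset.sum_apply, Pi.smul_apply, smul_eq_mul, Finset.mul_sum]
    exact Finset.sum_congr rfl fun j _ => mul_left_comm _ _ _
  simp [hexpand, hpivot]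

theorem perpWrt_supportedSubcode (hself : ∀ d ∈ D, ξ * d ∈ dualCode D)
    (hspan : ∀ β ∈ supportedSubcode (dualCode D) ξ, ∃ d ∈ D, ξ * d = β) :
    perpWrt ξ (supportedSubcode (dualCode D) ξ) = supportedSubcode (dualCode D) ξ := by
  ext δ
  constructor
  · rintro ⟨hδ, horth⟩
    refine ⟨fun d hd => ?_, hδ⟩
    rw [← ip_mul_right_of_supp_subset hδ]
    exact horth _ (mul_mem_supportedSubcode D ξ hself hd)
  · rintro ⟨hδC, hδ⟩
    refine ⟨hδ, fun _ hβ => ?_⟩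
    obtain ⟨d, hd, rfl⟩ := hspan _ hβ
    rw [ip_mul_right_of_supp_subset hδ]
    exact hδC d hd

theorem codeSupp_supportedSubcode (hself : ∀ d ∈ D, ξ * d ∈ dualCode D) (hone : 1 ∈ D) :
    codeSupp (supportedSubcode (dualCode D) ξ) = supp ξ := by
  refine (Set.iUnion₂_subset fun β hβ => hβ.2).antisymm fun i hi => Set.mem_iUnion₂.2 ⟨ξ, ?_, hi⟩
  simpa using mul_mem_supportedSubcode D ξ hself hone

theorem ip_eq_zero_of_mem_supportedSubcode (hone : 1 ∈ D) {β : Fin n → ZMod 2}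
    (hβ : β ∈ supportedSubcode (dualCode D) ξ) : ip β ξ = 0 := by
  calc ip β ξ = ip β (ξ * 1) := by rw [mul_one]
    _ = ip β 1 := ip_mul_right_of_supp_subset hβ.2 1
    _ = 0 := hβ.1 1 hone

end Shortening

section Concrete

def triLinear : (Fin 16 → ZMod 2) →ₗ[ZMod 2] Fin 48 → ZMod 2 :=
  LinearMap.funLeft (ZMod 2) (ZMod 2) fun i : Fin 48 => ⟨i.val % 16, Nat.mod_lt _ (by norm_num)⟩

@[simp] theorem triLinear_apply (a : Fin 16 → ZMod 2) : triLinear a = tri a := rfl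

def dGens : Fin 7 → Fin 48 → ZMod 2 := ![e1, e2, tri r0, tri r1, tri r2, tri r3, tri r4]

theorem Dcode_eq_span : Dcode = span (ZMod 2) (Set.range dGens) := by
  have htri : tri '' (RM14 : Set (Fin 16 → ZMod 2)) = (RM14.map triLinear : Set _) := rfl
  rw [Dcode, htri, RM14, Submodule.map_span, Submodule.span_union, Submodule.span_span,
    ← Submodule.span_union]
  congr 1
  simp only [dGens, Matrix.range_cons, Matrix.range_empty, Set.image_insert_eq,
    Set.image_singleton, triLinear_apply, Set.union_empty, Set.singleton_union, Set.insert_union]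

theorem one_mem_Dcode : (1 : Fin 48 → ZMod 2) ∈ Dcode := by
  rw [Dcode_eq_span]
  exact subset_span ⟨2, rfl⟩

theorem xiv_mul_mem_dualCode :
    ∀ d ∈ Dcode, xiv * d ∈ dualCode (Dcode : Set (Fin 48 → ZMod 2)) := by
  rw [Dcode_eq_span]
  exact mul_mem_dualCode_span dGens xiv (by decide)

def xivPivot : Fin 6 → Fin 48 := ![0, 1, 8, 17, 18, 34]

def xivFree : Fin 6 → Fin 48 := ![9, 25, 26, 32, 40, 42]

-- Indices into `dGens`, found by Gaussian elimination so that `xiv * xivLift j` is the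
-- `j`-th unit vector on the pivots.
def xivLiftIdx : Fin 6 → Finset (Fin 7) :=
  ![{3, 5, 6}, {0, 2, 5, 6}, {2, 3}, {0, 5}, {1, 2, 5}, {1}]

def xivLift (j : Fin 6) : Fin 48 → ZMod 2 := ∑ i ∈ xivLiftIdx j, dGens i

theorem xivLift_mem (j : Fin 6) : xivLift j ∈ Dcode := by
  rw [Dcode_eq_span]
  exact Submodule.sum_mem _ fun i _ => subset_span ⟨i, rfl⟩

theorem eq_zero_of_eq_zero_on_xivPivot {β : Fin 48 → ZMod 2}
    (hβ : β ∈ supportedSubcode (dualCode (Dcode : Set (Fin 48 → ZMod 2))) xiv)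
    (hpivot : ∀ k, β (xivPivot k) = 0) : β = 0 := by
  have hcover : ∀ i, xiv i ≠ 0 → (∃ k, xivPivot k = i) ∨ ∃ k, xivFree k = i := by decide
  refine eq_zero_of_supp_subset_range dGens (t := xivFree) (by decide) (by decide)
    (fun i hi => ?_) fun j => hβ.1 _ (by rw [Dcode_eq_span]; exact subset_span ⟨j, rfl⟩)
  obtain ⟨k, rfl⟩ | hfree := hcover i (hβ.2 hi)
  · exact absurd (hpivot k) hi
  · exact hfree

theorem exists_xiv_mul_eq :
    ∀ β ∈ supportedSubcode (dualCode (Dcode : Set (Fin 48 → ZMod 2))) xiv,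
      ∃ d ∈ Dcode, xiv * d = β :=
  exists_mul_eq_of_pivots Dcode xiv xiv_mul_mem_dualCode xivPivot xivLift xivLift_mem
    (by decide) fun _ hβ => eq_zero_of_eq_zero_on_xivPivot hβ

theorem stmt17 :
    selfDualWrt xiv
      {β | β ∈ dualCode (Dcode : Set (Fin 48 → ZMod 2)) ∧ supp β ⊆ supp xiv} ∧
    (∀ β ∈ dualCode (Dcode : Set (Fin 48 → ZMod 2)),
      supp β ⊆ supp xiv → ip β xiv = 0) ∧
    {β | β ∈ dualCode (Dcode : Set (Fin 48 → ZMod 2)) ∧ supp β ⊆ supp xiv} =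
      {β | β ∈ dualCode (Dcode : Set (Fin 48 → ZMod 2)) ∧ ip β xiv = 0 ∧
        supp β ⊆ supp xiv} := by
  have hip : ∀ β ∈ supportedSubcode (dualCode (Dcode : Set (Fin 48 → ZMod 2))) xiv,
      ip β xiv = 0 := fun _ => ip_eq_zero_of_mem_supportedSubcode Dcode xiv one_mem_Dcode
  refine ⟨⟨codeSupp_supportedSubcode Dcode xiv xiv_mul_mem_dualCode one_mem_Dcode,
    perpWrt_supportedSubcode Dcode xiv xiv_mul_mem_dualCode exists_xiv_mul_eq⟩,
    fun β hβ hsupp => hip β ⟨hβ, hsupp⟩, ?_⟩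
  ext β
  exact ⟨fun hβ => ⟨hβ.1, hip β hβ, hβ.2⟩, fun hβ => ⟨hβ.1, hβ.2.2⟩⟩
end Concrete
end
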